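/- The quotient (dx⟨t⟩/dt)/(2y⟨t⟩+μ₁x⟨t⟩+μ₃) lies in 1 + t·ℤ[1/2, μ⃗][[t]], and the quotient -(dy⟨t⟩/dt)/(μ₁y⟨t⟩ - 3x⟨t⟩² - 2μ₂x⟨t⟩ - μ₄) lies in 1 + t·ℤ[1/3, μ⃗][[t]]; since these two formal power series are equal, their common value lies in 1 + t·ℤ[μ⃗][[t]]. -/

import Mathlib

noncomputable section

/-- The ring `ℚ[μ₁,μ₂,μ₃,μ₄,μ₆]`, in which `ℤ[μ⃗]`, `ℤ[1/2,μ⃗]`, `ℤ[1/3,μ⃗]`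
all live. -/
abbrev QCoefRing : Type := MvPolynomial (Fin 5) ℚ

def μ1 : QCoefRing := MvPolynomial.X 0
def μ2 : QCoefRing := MvPolynomial.X 1
def μ3 : QCoefRing := MvPolynomial.X 2
def μ4 : QCoefRing := MvPolynomial.X 3
def μ6 : QCoefRing := MvPolynomial.X 4

open PowerSeries in
/-- The functional equation for `s = 1/x` in `t = -x/y`. -/
def SFunEq (s : PowerSeries QCoefRing) : Prop :=
  s = (1 + C μ2 * s + C μ4 * s ^ 2 + C μ6 * s ^ 3) * X ^ 2
      + (C μ1 * s + C μ3 * s ^ 2) * X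

abbrev toL : PowerSeries QCoefRing →+* LaurentSeries QCoefRing :=
  HahnSeries.ofPowerSeries ℤ QCoefRing

def tL : LaurentSeries QCoefRing := HahnSeries.single (1 : ℤ) (1 : QCoefRing)

abbrev CL : QCoefRing →+* LaurentSeries QCoefRing := HahnSeries.C

/-- `x = 1/s` and `y = -x/t` : the expansions of the curve coordinates. -/
structure IsXY (s : PowerSeries QCoefRing)
    (x y : LaurentSeries QCoefRing) : Prop where
  s0 : PowerSeries.constantCoeff s = 0
  seq : SFunEq s
  hx : x * toL s = 1
  hy : y * tL = -x

/-- A polynomial in the `μ`'s has all its coefficients in the subring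
`S ⊆ ℚ`. -/
def CoeffsIn (S : Subring ℚ) (c : QCoefRing) : Prop :=
  ∀ m : Fin 5 →₀ ℕ, MvPolynomial.coeff m c ∈ S

/-- The subring `ℤ` of `ℚ`. -/
def Zsub : Subring ℚ := Subring.closure ∅
/-- The subring `ℤ[1/2]` of `ℚ`. -/
def Zhalf : Subring ℚ := Subring.closure {(2 : ℚ)⁻¹}
/-- The subring `ℤ[1/3]` of `ℚ`. -/
def Zthird : Subring ℚ := Subring.closure {(3 : ℚ)⁻¹}

/-!
Write `s = t²·U` and `V = 1/U`, so that `x = t⁻²·V` and `y = -t⁻³·V`. Solving the curve equation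
for `U` coefficient by coefficient shows that `U`, hence `V`, lies in `1 + t·ℤ[μ⃗][[t]]`. After
clearing powers of `t`, the two quotients become `(tV' - 2V)/(μ₁tV + μ₃t³ - 2V)` and
`(tV' - 3V)/(-μ₁tV - 3V² - 2μ₂t²V - μ₄t⁴)`: series over `ℤ[μ⃗]` divided by series with constant
terms `-2` and `-3`. They agree because `x'·f_x + y'·f_y` is the derivative of `f(x, y) = 0`, so
their common value has coefficients in `ℤ[1/2, μ⃗] ∩ ℤ[1/3, μ⃗] = ℤ[μ⃗]`.
-/

open PowerSeries

namespace PowerSeries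

variable {R : Type*} [CommRing R]

def coeffSubring (T : Subring R) : Subring R⟦X⟧ := (map T.subtype).range

variable {T : Subring R}

theorem mem_coeffSubring {f : R⟦X⟧} : f ∈ coeffSubring T ↔ ∀ n, coeff n f ∈ T := by
  refine ⟨?_, fun h => ⟨mk fun n => ⟨coeff n f, h n⟩, by ext n; simp⟩⟩
  rintro ⟨g, rfl⟩ n
  simp

theorem coeffSubring_mono {T' : Subring R} (h : T ≤ T') : coeffSubring T ≤ coeffSubring T' :=
  fun _ hf => mem_coeffSubring.2 fun n => h (mem_coeffSubring.1 hf n)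

theorem X_mem_coeffSubring : X ∈ coeffSubring T := ⟨X, map_X _⟩

theorem C_mem_coeffSubring {a : R} (ha : a ∈ T) : C a ∈ coeffSubring T := ⟨C ⟨a, ha⟩, map_C _ _⟩

theorem derivative_mem_coeffSubring {f : R⟦X⟧} (hf : f ∈ coeffSubring T) :
    d⁄dX R f ∈ coeffSubring T :=
  mem_coeffSubring.2 fun n => by
    rw [coeff_derivative]
    exact mul_mem (mem_coeffSubring.1 hf _) (by exact_mod_cast natCast_mem T (n + 1))

theorem exists_eq_mul_of_mem_coeffSubring {a b : R⟦X⟧} (ha : a ∈ coeffSubring T)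
    (hb : b ∈ coeffSubring T) {c : R} (hc : c ∈ T) (hbc : constantCoeff b * c = 1) :
    ∃ w ∈ coeffSubring T, a = w * b ∧ constantCoeff w = constantCoeff a * c := by
  obtain ⟨b, rfl⟩ := hb
  have hb0 : constantCoeff (map T.subtype b) = constantCoeff b := by
    rw [← coeff_zero_eq_constantCoeff_apply, coeff_map, coeff_zero_eq_constantCoeff_apply]
    rfl
  rw [hb0] at hbc
  obtain ⟨e, he⟩ := ((isUnit_iff_constantCoeff (φ := b)).2 <|
    IsUnit.of_mul_eq_one (b := ⟨c, hc⟩) (Subtype.ext hbc)).exists_right_inv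
  have he0 : constantCoeff (map T.subtype e) = c := by
    have := congrArg constantCoeff (congrArg (map T.subtype) he)
    rw [map_mul, map_one, map_mul, map_one, hb0] at this
    linear_combination c * this - constantCoeff (map T.subtype e) * hbc
  refine ⟨a * map T.subtype e, mul_mem ha ⟨e, rfl⟩, ?_, by rw [map_mul, he0]⟩
  rw [mul_assoc, ← map_mul, mul_comm e, he, map_one, mul_one]

variable (T) in
def coeffsBelow (N : ℕ) : Subring R⟦X⟧ where
  carrier := {f | ∀ n < N, coeff n f ∈ T}
  mul_mem' {f g} hf hg n hn := by
    rw [coeff_mul]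
    refine sum_mem fun p hp => ?_
    have := Finset.HasAntidiagonal.mem_antidiagonal.1 hp
    exact mul_mem (hf _ (by omega)) (hg _ (by omega))
  one_mem' n _ := by
    rw [coeff_one]
    split_ifs
    exacts [one_mem T, zero_mem T]
  add_mem' hf hg n hn := by rw [map_add]; exact add_mem (hf n hn) (hg n hn)
  zero_mem' n _ := by rw [map_zero]; exact zero_mem T
  neg_mem' hf n hn := by rw [map_neg]; exact neg_mem (hf n hn)

theorem coeffSubring_le_coeffsBelow (N : ℕ) : coeffSubring T ≤ coeffsBelow T N :=
  fun _ hf n _ => mem_coeffSubring.1 hf n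

theorem X_mul_mem_coeffsBelow_succ {f : R⟦X⟧} {N : ℕ} (hf : f ∈ coeffsBelow T N) :
    X * f ∈ coeffsBelow T (N + 1) := by
  rintro (_ | n) hn
  · rw [coeff_zero_X_mul]; exact zero_mem T
  · rw [coeff_succ_X_mul]; exact hf n (by omega)

theorem mem_coeffSubring_of_eq_one_add_X_mul {f g : R⟦X⟧} (hfg : f = 1 + X * g)
    (hg : ∀ N, f ∈ coeffsBelow T N → g ∈ coeffsBelow T N) : f ∈ coeffSubring T := by
  have hf : ∀ N, f ∈ coeffsBelow T N := by
    intro N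
    induction N with
    | zero => intro n hn; omega
    | succ N ih =>
      rw [hfg]
      exact add_mem (one_mem _) (X_mul_mem_coeffsBelow_succ (hg N ih))
  exact mem_coeffSubring.2 fun n => hf (n + 1) n n.lt_succ_self

end PowerSeries

namespace MvPolynomial

variable {σ R : Type*} [CommRing R]

def coeffSubring (S : Subring R) : Subring (MvPolynomial σ R) := (map S.subtype).range

variable {S : Subring R}

theorem mem_coeffSubring {p : MvPolynomial σ R} : p ∈ coeffSubring S ↔ ∀ m, coeff m p ∈ S := by
  rw [coeffSubring, RingHom.mem_range, ← Set.mem_range, mem_range_map_iff_coeffs_subset]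
  constructor
  · intro h m
    by_cases hm : coeff m p = 0
    · rw [hm]; exact zero_mem S
    · obtain ⟨a, ha⟩ := h (coeff_mem_coeffs m hm)
      rw [← ha]; exact a.2
  · intro h a ha
    obtain ⟨m, -, rfl⟩ := mem_coeffs_iff.1 ha
    exact ⟨⟨_, h m⟩, rfl⟩

theorem coeffSubring_mono {S' : Subring R} (h : S ≤ S') :
    coeffSubring (σ := σ) S ≤ coeffSubring S' :=
  fun _ hp => mem_coeffSubring.2 fun m => h (mem_coeffSubring.1 hp m)

theorem X_mem_coeffSubring (i : σ) : X i ∈ coeffSubring S := ⟨X i, map_X _ _⟩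

theorem C_mem_coeffSubring {a : R} (ha : a ∈ S) : C a ∈ coeffSubring (σ := σ) S :=
  ⟨C ⟨a, ha⟩, map_C _ _⟩

end MvPolynomial

theorem Rat.exists_den_dvd_pow_of_mem_closure_inv {a : ℕ} {q : ℚ}
    (hq : q ∈ Subring.closure {(a : ℚ)⁻¹}) : ∃ k, q.den ∣ a ^ k := by
  induction hq using Subring.closure_induction with
  | mem x hx =>
    refine ⟨1, ?_⟩
    rw [Set.mem_singleton_iff.1 hx, Rat.inv_natCast_den]
    split_ifs <;> simp
  | zero => exact ⟨0, by simp⟩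
  | one => exact ⟨0, by simp⟩
  | add x y _ _ hx hy =>
    obtain ⟨k, hk⟩ := hx
    obtain ⟨l, hl⟩ := hy
    exact ⟨k + l, (Rat.add_den_dvd x y).trans (pow_add a k l ▸ mul_dvd_mul hk hl)⟩
  | neg x _ hx => simpa using hx
  | mul x y _ _ hx hy =>
    obtain ⟨k, hk⟩ := hx
    obtain ⟨l, hl⟩ := hy
    exact ⟨k + l, (Rat.mul_den_dvd x y).trans (pow_add a k l ▸ mul_dvd_mul hk hl)⟩

theorem Rat.mem_bot_of_mem_closure_inv_of_coprime {a b : ℕ} (hab : a.Coprime b) {q : ℚ}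
    (ha : q ∈ Subring.closure {(a : ℚ)⁻¹}) (hb : q ∈ Subring.closure {(b : ℚ)⁻¹}) :
    q ∈ (⊥ : Subring ℚ) := by
  obtain ⟨k, hk⟩ := exists_den_dvd_pow_of_mem_closure_inv ha
  obtain ⟨l, hl⟩ := exists_den_dvd_pow_of_mem_closure_inv hb
  exact Subring.mem_bot.2 ⟨q.num, Rat.coe_int_num_of_den_eq_one
    (Nat.eq_one_of_dvd_coprimes (hab.pow k l) hk hl)⟩

theorem mem_Zsub_of_mem_Zhalf_of_mem_Zthird {q : ℚ} (h2 : q ∈ Zhalf) (h3 : q ∈ Zthird) :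
    q ∈ Zsub := by
  rw [Zsub, Subring.closure_empty]
  exact Rat.mem_bot_of_mem_closure_inv_of_coprime (a := 2) (b := 3) (by norm_num)
    (by simpa [Zhalf] using h2) (by simpa [Zthird] using h3)

theorem Zsub_le (S : Subring ℚ) : Zsub ≤ S := by
  rw [Zsub, Subring.closure_empty]
  exact bot_le

namespace WeierstrassCurve

variable {R : Type*} [CommRing R] (W : WeierstrassCurve R)

-- `U = s/t²` for `s = 1/x` and `t = -x/y`: the equation of `W`, divided by `x³` and solved for `U`.
def IsScaledInvX (U : R⟦X⟧) : Prop :=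
  U = 1 + X * (C W.a₁ * U + C W.a₂ * (X * U) + C W.a₃ * (X ^ 2 * U ^ 2)
    + C W.a₄ * (X ^ 3 * U ^ 2) + C W.a₆ * (X ^ 5 * U ^ 3))

-- `V = t²·x`: the equation of `W` at `(x, y) = (t⁻²·V, -t⁻³·V)`, multiplied by `t⁶`.
def IsScaledX (V : R⟦X⟧) : Prop :=
  V ^ 2 - C W.a₁ * X * V ^ 2 - C W.a₃ * X ^ 3 * V
    = V ^ 3 + C W.a₂ * X ^ 2 * V ^ 2 + C W.a₄ * X ^ 4 * V + C W.a₆ * X ^ 6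

-- With `x = t⁻²·V` and `y = -t⁻³·V`, these are `t³·dx/dt`, `-t⁴·dy/dt`, `t³·f_y` and `t⁴·f_x`.
def scaledDx (V : R⟦X⟧) : R⟦X⟧ := X * d⁄dX R V - 2 * V

def scaledNegDy (V : R⟦X⟧) : R⟦X⟧ := X * d⁄dX R V - 3 * V

def scaledFy (V : R⟦X⟧) : R⟦X⟧ := C W.a₁ * X * V + C W.a₃ * X ^ 3 - 2 * V

def scaledFx (V : R⟦X⟧) : R⟦X⟧ :=
  -(C W.a₁ * X * V) - (3 * V ^ 2 + 2 * C W.a₂ * X ^ 2 * V + C W.a₄ * X ^ 4)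

variable {W} {U V : R⟦X⟧}

theorem derivative_mul_sq_eq_of_mul_eq_X_sq {s : R⟦X⟧} (hsV : s * V = X ^ 2) :
    d⁄dX R s * V ^ 2 = -(X * scaledDx V) := by
  have hD := congrArg (d⁄dX R) hsV
  simp only [Derivation.leibniz, Derivation.leibniz_pow, derivative_X, smul_eq_mul] at hD
  rw [scaledDx]
  linear_combination V * hD - d⁄dX R V * hsV

theorem add_X_mul_derivative_mul_sq_eq_of_mul_eq_X_sq {s : R⟦X⟧} (hsV : s * V = X ^ 2) :
    (s + X * d⁄dX R s) * V ^ 2 = -(X ^ 2 * scaledNegDy V) := by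
  have hs' := derivative_mul_sq_eq_of_mul_eq_X_sq hsV
  rw [scaledDx] at hs'
  rw [scaledNegDy]
  linear_combination V * hsV + X * hs'

theorem IsScaledInvX.constantCoeff_eq_one (hU : W.IsScaledInvX U) : constantCoeff U = 1 := by
  rw [hU]
  simp

theorem IsScaledInvX.mem_coeffSubring {T : Subring R}
    (hT : {W.a₁, W.a₂, W.a₃, W.a₄, W.a₆} ⊆ (T : Set R)) (hU : W.IsScaledInvX U) :
    U ∈ coeffSubring T := by
  refine mem_coeffSubring_of_eq_one_add_X_mul hU fun N hN => ?_
  have hC {a : R} (ha : a ∈ ({W.a₁, W.a₂, W.a₃, W.a₄, W.a₆} : Set R)) : C a ∈ coeffsBelow T N :=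
    coeffSubring_le_coeffsBelow N (C_mem_coeffSubring (hT ha))
  have hX : X ∈ coeffsBelow T N := coeffSubring_le_coeffsBelow N X_mem_coeffSubring
  have hXU (i j : ℕ) : X ^ i * U ^ j ∈ coeffsBelow T N := mul_mem (pow_mem hX i) (pow_mem hN j)
  exact add_mem (add_mem (add_mem (add_mem (mul_mem (hC (by simp)) hN)
    (mul_mem (hC (by simp)) (mul_mem hX hN))) (mul_mem (hC (by simp)) (hXU 2 2)))
    (mul_mem (hC (by simp)) (hXU 3 2))) (mul_mem (hC (by simp)) (hXU 5 3))

theorem IsScaledInvX.isScaledX (hU : W.IsScaledInvX U) (hUV : U * V = 1) : W.IsScaledX V := by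
  rw [IsScaledInvX] at hU
  rw [IsScaledX]
  linear_combination V ^ 3 * hU - (V ^ 2 - C W.a₁ * X * V ^ 2 - C W.a₂ * X ^ 2 * V ^ 2
    - (C W.a₃ * X ^ 3 + C W.a₄ * X ^ 4) * V * (U * V + 1)
    - C W.a₆ * X ^ 6 * (U ^ 2 * V ^ 2 + U * V + 1)) * hUV

theorem IsScaledX.scaledDx_mul_scaledFx (hV : W.IsScaledX V) :
    scaledDx V * W.scaledFx V = scaledNegDy V * W.scaledFy V := by
  rw [IsScaledX] at hV
  have hD := congrArg (d⁄dX R) hV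
  simp only [map_add, map_sub, Derivation.leibniz, Derivation.leibniz_pow, derivative_C,
    derivative_X, smul_eq_mul] at hD
  rw [scaledDx, scaledNegDy, scaledFx, scaledFy]
  linear_combination X * hD - 6 * hV

theorem constantCoeff_scaledDx (hV0 : constantCoeff V = 1) :
    constantCoeff (scaledDx V) = -2 := by
  simp [scaledDx, hV0, map_ofNat]

theorem constantCoeff_scaledNegDy (hV0 : constantCoeff V = 1) :
    constantCoeff (scaledNegDy V) = -3 := by
  simp [scaledNegDy, hV0, map_ofNat]

theorem constantCoeff_scaledFy (hV0 : constantCoeff V = 1) :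
    constantCoeff (W.scaledFy V) = -2 := by
  simp [scaledFy, hV0, map_ofNat]

theorem constantCoeff_scaledFx (hV0 : constantCoeff V = 1) :
    constantCoeff (W.scaledFx V) = -3 := by
  simp [scaledFx, hV0, map_ofNat]

theorem scaledFy_ne_zero [CharZero R] (hV0 : constantCoeff V = 1) : W.scaledFy V ≠ 0 :=
  fun h => by simpa [h] using constantCoeff_scaledFy (W := W) hV0

theorem scaledFx_ne_zero [CharZero R] (hV0 : constantCoeff V = 1) : W.scaledFx V ≠ 0 :=
  fun h => by simpa [h] using constantCoeff_scaledFx (W := W) hV0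

theorem IsScaledX.eq_of_scaledDx_eq_of_scaledNegDy_eq [IsDomain R] [CharZero R]
    (hV : W.IsScaledX V) (hV0 : constantCoeff V = 1) {w w' : R⟦X⟧}
    (hw : scaledDx V = w * W.scaledFy V) (hw' : scaledNegDy V = w' * W.scaledFx V) : w = w' :=
  mul_right_cancel₀ (mul_ne_zero (scaledFy_ne_zero hV0) (scaledFx_ne_zero hV0)) <| by
    linear_combination W.scaledFy V * hw' - W.scaledFx V * hw + hV.scaledDx_mul_scaledFx

theorem exists_scaledDx_eq_mul_scaledFy {T : Subring R}
    (hT : {W.a₁, W.a₂, W.a₃, W.a₄, W.a₆} ⊆ (T : Set R)) (hV : V ∈ coeffSubring T)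
    (hV0 : constantCoeff V = 1) {c : R} (hc : c ∈ T) (h2c : 2 * c = 1) :
    ∃ w ∈ coeffSubring T, scaledDx V = w * W.scaledFy V ∧ constantCoeff w = 1 := by
  have hC {a : R} (ha : a ∈ ({W.a₁, W.a₂, W.a₃, W.a₄, W.a₆} : Set R)) : C a ∈ coeffSubring T :=
    C_mem_coeffSubring (hT ha)
  have hdx : scaledDx V ∈ coeffSubring T :=
    sub_mem (mul_mem X_mem_coeffSubring (derivative_mem_coeffSubring hV))
      (mul_mem (ofNat_mem _ 2) hV)
  have hfy : W.scaledFy V ∈ coeffSubring T :=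
    sub_mem (add_mem (mul_mem (mul_mem (hC (by simp)) X_mem_coeffSubring) hV)
      (mul_mem (hC (by simp)) (pow_mem X_mem_coeffSubring 3))) (mul_mem (ofNat_mem _ 2) hV)
  obtain ⟨w, hw, hdxw, hw0⟩ := exists_eq_mul_of_mem_coeffSubring hdx hfy (neg_mem hc)
    (by rw [constantCoeff_scaledFy hV0]; linear_combination h2c)
  exact ⟨w, hw, hdxw, by rw [hw0, constantCoeff_scaledDx hV0]; linear_combination h2c⟩

theorem exists_scaledNegDy_eq_mul_scaledFx {T : Subring R}
    (hT : {W.a₁, W.a₂, W.a₃, W.a₄, W.a₆} ⊆ (T : Set R)) (hV : V ∈ coeffSubring T)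
    (hV0 : constantCoeff V = 1) {c : R} (hc : c ∈ T) (h3c : 3 * c = 1) :
    ∃ w ∈ coeffSubring T, scaledNegDy V = w * W.scaledFx V ∧ constantCoeff w = 1 := by
  have hC {a : R} (ha : a ∈ ({W.a₁, W.a₂, W.a₃, W.a₄, W.a₆} : Set R)) : C a ∈ coeffSubring T :=
    C_mem_coeffSubring (hT ha)
  have hdy : scaledNegDy V ∈ coeffSubring T :=
    sub_mem (mul_mem X_mem_coeffSubring (derivative_mem_coeffSubring hV))
      (mul_mem (ofNat_mem _ 3) hV)
  have hfx : W.scaledFx V ∈ coeffSubring T :=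
    sub_mem (neg_mem (mul_mem (mul_mem (hC (by simp)) X_mem_coeffSubring) hV))
      (add_mem (add_mem (mul_mem (ofNat_mem _ 3) (pow_mem hV 2))
        (mul_mem (mul_mem (mul_mem (ofNat_mem _ 2) (hC (by simp)))
          (pow_mem X_mem_coeffSubring 2)) hV))
        (mul_mem (hC (by simp)) (pow_mem X_mem_coeffSubring 4)))
  obtain ⟨w, hw, hdyw, hw0⟩ := exists_eq_mul_of_mem_coeffSubring hdy hfx (neg_mem hc)
    (by rw [constantCoeff_scaledFx hV0]; linear_combination h3c)
  exact ⟨w, hw, hdyw, by rw [hw0, constantCoeff_scaledNegDy hV0]; linear_combination h3c⟩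

end WeierstrassCurve

open WeierstrassCurve

@[simps]
def μCurve : WeierstrassCurve QCoefRing := ⟨μ1, μ2, μ3, μ4, μ6⟩

theorem μCurve_coeffs_subset (S : Subring ℚ) :
    {μCurve.a₁, μCurve.a₂, μCurve.a₃, μCurve.a₄, μCurve.a₆} ⊆
      ((MvPolynomial.coeffSubring S : Subring QCoefRing) : Set QCoefRing) := by
  simp [Set.insert_subset_iff, μ1, μ2, μ3, μ4, μ6, MvPolynomial.X_mem_coeffSubring]

theorem coeffsIn_coeff_of_mem_coeffSubring {S : Subring ℚ} {w : QCoefRing⟦X⟧}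
    (hw : w ∈ coeffSubring (MvPolynomial.coeffSubring S)) (n : ℕ) : CoeffsIn S (coeff n w) :=
  MvPolynomial.mem_coeffSubring.1 (mem_coeffSubring.1 hw n)

theorem SFunEq.exists_eq_X_sq_mul {s : QCoefRing⟦X⟧} (hs : SFunEq s)
    (hs0 : constantCoeff s = 0) :
    ∃ U, s = X ^ 2 * U ∧ μCurve.IsScaledInvX U := by
  rw [SFunEq] at hs
  obtain ⟨s₁, rfl⟩ := X_dvd_iff.2 hs0
  obtain ⟨U, rfl⟩ : X ∣ s₁ := ⟨1 + C μ1 * s₁ + C μ2 * (X * s₁) + C μ3 * (X * s₁ ^ 2)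
    + C μ4 * (X ^ 2 * s₁ ^ 2) + C μ6 * (X ^ 3 * s₁ ^ 3), X_mul_cancel (by linear_combination hs)⟩
  refine ⟨U, by ring, X_mul_cancel (X_mul_cancel ?_)⟩
  simp only [μCurve_a₁, μCurve_a₂, μCurve_a₃, μCurve_a₄, μCurve_a₆]
  linear_combination hs

theorem tL_ne_zero : tL ≠ 0 := HahnSeries.single_ne_zero one_ne_zero

theorem toL_X : toL X = tL := HahnSeries.ofPowerSeries_X

theorem CL_eq_toL_C (a : QCoefRing) : CL a = toL (C a) := (HahnSeries.ofPowerSeries_C a).symm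

theorem eq_iff_of_tL_pow_mul {A B : LaurentSeries QCoefRing} {a b : QCoefRing⟦X⟧} (n : ℕ)
    (hA : tL ^ n * A = toL a) (hB : tL ^ n * B = toL b) : A = B ↔ a = b := by
  rw [← (HahnSeries.ofPowerSeries_injective (Γ := ℤ) (R := QCoefRing)).eq_iff, ← hA, ← hB,
    mul_right_inj' (pow_ne_zero n tL_ne_zero)]

section Expansion

variable {s V : QCoefRing⟦X⟧} {x y : LaurentSeries QCoefRing}

theorem IsXY.mul_tL_sq (h : IsXY s x y) (hsV : s * V = X ^ 2) : x * tL ^ 2 = toL V := by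
  rw [← toL_X, ← map_pow, ← hsV, map_mul, ← mul_assoc, h.hx, one_mul]

theorem IsXY.mul_tL_cube (h : IsXY s x y) (hsV : s * V = X ^ 2) : y * tL ^ 3 = -toL V := by
  rw [← h.mul_tL_sq hsV, pow_succ', ← mul_assoc, h.hy]
  ring

theorem dx_eq_mul_fy_iff (hsV : s * V = X ^ 2) (hx : x * tL ^ 2 = toL V)
    (hy : y * tL ^ 3 = -toL V) (w : QCoefRing⟦X⟧) :
    -(toL (d⁄dX _ s)) * x ^ 2 = toL w * (2 * y + CL μ1 * x + CL μ3) ↔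
      scaledDx V = w * μCurve.scaledFy V := by
  have hs' := congrArg toL (derivative_mul_sq_eq_of_mul_eq_X_sq hsV)
  simp only [map_mul, map_neg, map_pow, toL_X] at hs'
  refine eq_iff_of_tL_pow_mul 3 (mul_left_cancel₀ tL_ne_zero ?_) ?_
  · linear_combination (-(toL (d⁄dX _ s)) * (x * tL ^ 2 + toL V)) * hx - hs'
  · simp only [scaledFy, map_mul, map_add, map_sub, map_pow, map_ofNat, toL_X, ← CL_eq_toL_C,
      μCurve_a₁, μCurve_a₃]
    linear_combination toL w * (2 * hy + CL μ1 * tL * hx)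

theorem negDy_eq_mul_fx_iff (hsV : s * V = X ^ 2) (hx : x * tL ^ 2 = toL V)
    (hy : y * tL ^ 3 = -toL V) (w : QCoefRing⟦X⟧) :
    -(toL (s + X * d⁄dX _ s) * y ^ 2)
        = toL w * (CL μ1 * y - (3 * x ^ 2 + 2 * CL μ2 * x + CL μ4)) ↔
      scaledNegDy V = w * μCurve.scaledFx V := by
  have hs' := congrArg toL (add_X_mul_derivative_mul_sq_eq_of_mul_eq_X_sq hsV)
  simp only [map_mul, map_neg, map_pow] at hs'
  rw [toL_X] at hs'
  refine eq_iff_of_tL_pow_mul 4 (mul_left_cancel₀ (pow_ne_zero 2 tL_ne_zero) ?_) ?_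
  · linear_combination (-(toL (s + X * d⁄dX _ s)) * (y * tL ^ 3 - toL V)) * hy - hs'
  · simp only [scaledFx, map_mul, map_add, map_sub, map_neg, map_pow, map_ofNat, toL_X,
      ← CL_eq_toL_C, μCurve_a₁, μCurve_a₂, μCurve_a₄]
    linear_combination
      toL w * (CL μ1 * tL * hy - (3 * (x * tL ^ 2 + toL V) + 2 * CL μ2 * tL ^ 2) * hx)

end Expansion

open PowerSeries in
-- `dx/dt = -s'·x²` and `dy/dt = (s + t·s')·y²`.
/-- `ω₁ = dx/f_y` lies in `1 + t·ℤ[1/2,μ⃗][[t]]`, `ω₁ = -dy/f_x` lies in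
`1 + t·ℤ[1/3,μ⃗][[t]]`, and since the two quotients coincide, the common value
lies in `1 + t·ℤ[μ⃗][[t]]`.  Here `dx/dt = -s'·x²` and `dy/dt = (s+ts')·y²`. -/
theorem statement4 (s : PowerSeries QCoefRing) (x y : LaurentSeries QCoefRing)
    (h : IsXY s x y) :
    (∃ w : PowerSeries QCoefRing,
      -(toL s.derivativeFun) * x ^ 2 = toL w * (2 * y + CL μ1 * x + CL μ3) ∧
      constantCoeff w = 1 ∧ ∀ n : ℕ, CoeffsIn Zhalf (coeff n w)) ∧
    (∃ w : PowerSeries QCoefRing,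
      -(toL (s + X * s.derivativeFun) * y ^ 2)
        = toL w * (CL μ1 * y - (3 * x ^ 2 + 2 * CL μ2 * x + CL μ4)) ∧
      constantCoeff w = 1 ∧ ∀ n : ℕ, CoeffsIn Zthird (coeff n w)) ∧
    (∀ w w' : PowerSeries QCoefRing,
      -(toL s.derivativeFun) * x ^ 2 = toL w * (2 * y + CL μ1 * x + CL μ3) →
      -(toL (s + X * s.derivativeFun) * y ^ 2)
        = toL w' * (CL μ1 * y - (3 * x ^ 2 + 2 * CL μ2 * x + CL μ4)) →
      w = w' ∧ ∀ n : ℕ, CoeffsIn Zsub (coeff n w)) := by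
  obtain ⟨U, hsU, hU⟩ := h.seq.exists_eq_X_sq_mul h.s0
  obtain ⟨V, hVℤ, hVU, hV0⟩ := exists_eq_mul_of_mem_coeffSubring (one_mem _)
    (hU.mem_coeffSubring (μCurve_coeffs_subset Zsub)) (one_mem _)
    (by rw [hU.constantCoeff_eq_one, one_mul])
  rw [map_one, one_mul] at hV0
  have hV (S : Subring ℚ) : V ∈ coeffSubring (MvPolynomial.coeffSubring S) :=
    coeffSubring_mono (MvPolynomial.coeffSubring_mono (Zsub_le S)) hVℤ
  have hsV : s * V = X ^ 2 := by rw [hsU, mul_assoc, mul_comm U, ← hVU, mul_one]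
  have hVX : μCurve.IsScaledX V := hU.isScaledX (by rw [mul_comm, ← hVU])
  have hx := h.mul_tL_sq hsV
  have hy := h.mul_tL_cube hsV
  obtain ⟨w₂, hw₂, hdx, hw₂0⟩ := exists_scaledDx_eq_mul_scaledFy (μCurve_coeffs_subset Zhalf)
    (hV Zhalf) hV0 (MvPolynomial.C_mem_coeffSubring (Subring.subset_closure rfl))
    (by rw [← map_ofNat MvPolynomial.C 2, ← map_mul, mul_inv_cancel₀ two_ne_zero, map_one])
  obtain ⟨w₃, hw₃, hdy, hw₃0⟩ := exists_scaledNegDy_eq_mul_scaledFx (μCurve_coeffs_subset Zthird)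
    (hV Zthird) hV0 (MvPolynomial.C_mem_coeffSubring (Subring.subset_closure rfl))
    (by rw [← map_ofNat MvPolynomial.C 3, ← map_mul, mul_inv_cancel₀ three_ne_zero, map_one])
  refine ⟨⟨w₂, (dx_eq_mul_fy_iff hsV hx hy w₂).2 hdx, hw₂0,
      coeffsIn_coeff_of_mem_coeffSubring hw₂⟩,
    ⟨w₃, (negDy_eq_mul_fx_iff hsV hx hy w₃).2 hdy, hw₃0, coeffsIn_coeff_of_mem_coeffSubring hw₃⟩,
    fun w w' hw hw' => ?_⟩
  replace hw := (dx_eq_mul_fy_iff hsV hx hy w).1 hw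
  replace hw' := (negDy_eq_mul_fx_iff hsV hx hy w').1 hw'
  have hww' := hVX.eq_of_scaledDx_eq_of_scaledNegDy_eq hV0 hw hw'
  have hww₂ : w = w₂ := mul_right_cancel₀ (scaledFy_ne_zero hV0) (hw.symm.trans hdx)
  have hww₃ : w' = w₃ := mul_right_cancel₀ (scaledFx_ne_zero hV0) (hw'.symm.trans hdy)
  refine ⟨hww', fun n m => mem_Zsub_of_mem_Zhalf_of_mem_Zthird ?_ ?_⟩
  · exact hww₂ ▸ coeffsIn_coeff_of_mem_coeffSubring hw₂ n m
  · exact (hww'.trans hww₃) ▸ coeffsIn_coeff_of_mem_coeffSubring hw₃ n m
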